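/- arXiv:1111.2002 — 2 statements merged into one kernel-verified Lean document; each statement's English description precedes it below -/
import Mathlib

section
/- Let ℓ be an odd prime, R the ring of integers of the unramified quadratic extension of ℚ_ℓ, with x ↦ x̄ the nontrivial continuous automorphism. Let h ∈ M₂(R) be nonzero and hermitian (h* = h, where h* is the conjugate transpose), and let ε(h) be the largest integer e such that ℓ^{−e} h ∈ M₂(R). Then for every positive integer m there exist u ∈ SL₂(R) and a, d ∈ ℤ_ℓ with ℓ ∤ a such that u* h u ≡ ℓ^{ε(h)} diag(a, d) modulo ℓ^m M₂(R). -/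
/-!
After dividing by `ℓ^e`, the matrix lies in `M₂(R)` and has an entry that is a unit; `R` is a
local ring with maximal ideal `ℓR`. If neither diagonal entry is a unit, the off-diagonal
entry `b` is, and the shear `!![1, 0; b⁻¹, 1]` produces the diagonal entry
`2 + (element of ℓR)`, a unit since `ℓ` is odd. Once the `(0,0)` entry `α` is a unit, the
shear `!![1, -b α⁻¹; 0, 1]` diagonalizes the form exactly. The diagonal entries of a hermitian
matrix are fixed by the Galois involution, hence lie in `ℚ_ℓ ∩ R = ℤ_ℓ`.
-/

open Matrix IsLocalRing Module

section HermitianForm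

variable {S : Type*} [CommRing S] (τ : S →+* S)

def conjTransposeBy {m n : Type*} (u : Matrix m n S) : Matrix n m S :=
  Matrix.of fun i j => τ (u j i)

variable {τ}

theorem conjTransposeBy_mul {l m n : Type*} [Fintype m] (A : Matrix l m S) (B : Matrix m n S) :
    conjTransposeBy τ (A * B) = conjTransposeBy τ B * conjTransposeBy τ A := by
  ext i j
  simp [conjTransposeBy, mul_apply, mul_comm]

theorem conjTransposeBy_conjTransposeBy {m n : Type*} (hτ : Function.Involutive τ)
    (A : Matrix m n S) : conjTransposeBy τ (conjTransposeBy τ A) = A := by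
  ext i j
  exact hτ _

theorem conjTransposeBy_conj {n : Type*} [Fintype n] (hτ : Function.Involutive τ)
    {H : Matrix n n S} (hH : conjTransposeBy τ H = H) (u : Matrix n n S) :
    conjTransposeBy τ (conjTransposeBy τ u * H * u) = conjTransposeBy τ u * H * u := by
  rw [conjTransposeBy_mul, conjTransposeBy_mul, conjTransposeBy_conjTransposeBy hτ, hH,
    Matrix.mul_assoc]

theorem isUnit_add_of_mem_maximalIdeal [IsLocalRing S] {a b : S} (ha : IsUnit a)
    (hb : b ∈ maximalIdeal S) : IsUnit (a + b) := by
  by_contra hab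
  exact (notMem_maximalIdeal.mpr ha)
    (by simpa using sub_mem ((mem_maximalIdeal _).mpr hab) hb)

theorem exists_det_eq_one_isUnit_conj_apply_zero_zero [IsLocalRing S] (h2 : IsUnit (2 : S))
    {H : Matrix (Fin 2) (Fin 2) S} (hH : conjTransposeBy τ H = H)
    (hunit : ∃ i j, IsUnit (H i j)) :
    ∃ u : Matrix (Fin 2) (Fin 2) S, u.det = 1 ∧ IsUnit ((conjTransposeBy τ u * H * u) 0 0) := by
  have hH' : ∀ i j, τ (H j i) = H i j := fun i j => congrFun₂ hH i j
  by_cases h00 : IsUnit (H 0 0)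
  · exact ⟨1, det_one, by simpa [conjTransposeBy, mul_apply, Fin.sum_univ_two, one_apply]⟩
  by_cases h11 : IsUnit (H 1 1)
  · exact ⟨!![0, -1; 1, 0], by simp [det_fin_two],
      by simpa [conjTransposeBy, mul_apply, Fin.sum_univ_two]⟩
  have h01 : IsUnit (H 0 1) := by
    obtain ⟨i, j, hij⟩ := hunit
    fin_cases i <;> fin_cases j
    · exact absurd hij h00
    · exact hij
    · exact hH' 0 1 ▸ hij.map τ
    · exact absurd hij h11
  set t : S := ↑h01.unit⁻¹
  have hmul : H 0 1 * t = 1 := h01.mul_val_inv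
  have hmul' : τ t * H 1 0 = 1 := by rw [← hH' 1 0, ← map_mul, mul_comm, hmul, map_one]
  refine ⟨!![1, 0; t, 1], by simp [det_fin_two], ?_⟩
  have hentry : (conjTransposeBy τ !![1, 0; t, 1] * H * !![1, 0; t, 1]) 0 0
      = 2 + (H 0 0 + τ t * H 1 1 * t) := by
    simp only [conjTransposeBy, of_apply, cons_val', cons_val_fin_one, Fin.isValue, mul_apply,
      cons_val_zero, Fin.sum_univ_two, map_one, one_mul, cons_val_one, mul_one]
    linear_combination hmul + hmul'
  rw [hentry]
  exact isUnit_add_of_mem_maximalIdeal h2 (add_mem ((mem_maximalIdeal _).mpr h00)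
    (Ideal.mul_mem_right _ _ (Ideal.mul_mem_left _ _ ((mem_maximalIdeal _).mpr h11))))

theorem exists_det_eq_one_conj_eq_diagonal_of_isUnit {H : Matrix (Fin 2) (Fin 2) S}
    (hH : conjTransposeBy τ H = H) (h00 : IsUnit (H 0 0)) :
    ∃ u : Matrix (Fin 2) (Fin 2) S, u.det = 1 ∧
      ∃ δ, conjTransposeBy τ u * H * u = diagonal ![H 0 0, δ] := by
  have hH' : ∀ i j, τ (H j i) = H i j := fun i j => congrFun₂ hH i j
  set y : S := ↑h00.unit⁻¹
  have hy : H 0 0 * y = 1 := h00.mul_val_inv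
  have hτy : τ y = y := by
    have : H 0 0 * τ y = 1 := by rw [← hH' 0 0, ← map_mul, hy, map_one]
    exact h00.mul_right_injective.eq_iff.mp (this.trans hy.symm)
  refine ⟨!![1, -(H 0 1 * y); 0, 1], by simp [det_fin_two], H 1 1 - H 1 0 * H 0 1 * y, ?_⟩
  ext i j
  fin_cases i <;> fin_cases j <;>
    simp only [conjTransposeBy, Fin.isValue, of_apply, cons_val', cons_val_fin_one, Fin.zero_eta,
      Fin.mk_one, mul_apply, cons_val_zero, cons_val_one, Fin.sum_univ_two, map_one, map_zero,
      map_neg, map_mul, hH', hτy, one_mul, zero_mul, neg_mul, mul_neg, mul_one, mul_zero,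
      add_zero, ne_eq, zero_ne_one, one_ne_zero, not_false_eq_true, diagonal_apply_eq,
      diagonal_apply_ne]
  · linear_combination (-H 0 1) * hy
  · linear_combination (-H 1 0) * hy
  · linear_combination (H 1 0 * H 0 1 * y) * hy

theorem exists_det_eq_one_conj_eq_diagonal [IsLocalRing S] (hτ : Function.Involutive τ)
    (h2 : IsUnit (2 : S)) {H : Matrix (Fin 2) (Fin 2) S} (hH : conjTransposeBy τ H = H)
    (hunit : ∃ i j, IsUnit (H i j)) :
    ∃ u : Matrix (Fin 2) (Fin 2) S, u.det = 1 ∧ ∃ α δ, IsUnit α ∧ τ α = α ∧ τ δ = δ ∧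
      conjTransposeBy τ u * H * u = diagonal ![α, δ] := by
  obtain ⟨u₀, hu₀, hα⟩ := exists_det_eq_one_isUnit_conj_apply_zero_zero h2 hH hunit
  obtain ⟨u₁, hu₁, δ, hdiag⟩ :=
    exists_det_eq_one_conj_eq_diagonal_of_isUnit (conjTransposeBy_conj hτ hH u₀) hα
  have hconj : conjTransposeBy τ (u₀ * u₁) * H * (u₀ * u₁)
      = diagonal ![(conjTransposeBy τ u₀ * H * u₀) 0 0, δ] := by
    rw [← hdiag, conjTransposeBy_mul]
    simp only [Matrix.mul_assoc]
  have hherm := conjTransposeBy_conj hτ hH (u₀ * u₁)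
  rw [hconj] at hherm
  exact ⟨u₀ * u₁, by rw [det_mul, hu₀, hu₁, one_mul], _, δ, hα, congrFun₂ hherm 0 0,
    congrFun₂ hherm 1 1, hconj⟩

end HermitianForm

section QuadraticExtension

variable {K E : Type*} [Field K] [Field E] [Algebra K E] {σ : E ≃ₐ[K] E}

theorem AlgEquiv.eq_one_or_eq_of_finrank_eq_two (h2 : finrank K E = 2) (hσ : σ ≠ 1)
    (f : E ≃ₐ[K] E) : f = 1 ∨ f = σ := by
  have : FiniteDimensional K E := .of_finrank_pos (by omega)
  by_contra! hf
  classical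
  have h3 : ({1, σ, f} : Finset (E ≃ₐ[K] E)).card = 3 := by
    rw [Finset.card_insert_of_notMem (by simp [hσ.symm, hf.1.symm]),
      Finset.card_pair hf.2.symm]
  have := (Finset.card_le_univ {1, σ, f}).trans AlgEquiv.card_le
  omega

theorem AlgEquiv.involutive_of_finrank_eq_two (h2 : finrank K E = 2) (hσ : σ ≠ 1) :
    Function.Involutive σ := by
  have hσσ : σ * σ = 1 :=
    (AlgEquiv.eq_one_or_eq_of_finrank_eq_two h2 hσ (σ * σ)).resolve_right
      fun h => hσ (mul_eq_left.mp h)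
  exact fun x => congrArg (· x) hσσ

theorem AlgEquiv.mem_range_algebraMap_of_finrank_eq_two (h2 : finrank K E = 2) (hσ : σ ≠ 1)
    {x : E} (hx : σ x = x) : x ∈ Set.range (algebraMap K E) := by
  have : FiniteDimensional K E := .of_finrank_pos (by omega)
  have hcard : Nat.card (E ≃ₐ[K] E) = finrank K E := by
    rw [h2, Nat.card_eq_two_iff' 1]
    exact ⟨σ, hσ, fun f hf => (AlgEquiv.eq_one_or_eq_of_finrank_eq_two h2 hσ f).resolve_left hf⟩
  have := IsGalois.of_card_aut_eq_finrank K E hcard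
  refine (IsGalois.mem_range_algebraMap_iff_fixed x).mpr fun f => ?_
  rcases AlgEquiv.eq_one_or_eq_of_finrank_eq_two h2 hσ f with rfl | rfl
  · rfl
  · exact hx

theorem exists_algebraMap_eq_of_isIntegral_of_fixed {A : Type*} [CommRing A] [IsDomain A]
    [IsIntegrallyClosed A] [Algebra A K] [IsFractionRing A K] [Algebra A E] [IsScalarTower A K E]
    (h2 : finrank K E = 2) (hσ : σ ≠ 1) {x : E} (hint : IsIntegral A x) (hx : σ x = x) :
    ∃ a : A, algebraMap A E a = x := by
  obtain ⟨p, rfl⟩ := AlgEquiv.mem_range_algebraMap_of_finrank_eq_two h2 hσ hx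
  obtain ⟨a, rfl⟩ := IsIntegrallyClosed.algebraMap_eq_of_integral
    ((isIntegral_algebraMap_iff (algebraMap K E).injective).mp hint)
  exact ⟨a, IsScalarTower.algebraMap_apply A K E a⟩

end QuadraticExtension

theorem IsLocalRing.of_isIntegral_of_isMaximal_map {A S : Type*} [CommRing A] [IsLocalRing A]
    [CommRing S] [Algebra A S] [Algebra.IsIntegral A S]
    (h : ((maximalIdeal A).map (algebraMap A S)).IsMaximal) : IsLocalRing S := by
  refine of_unique_max_ideal ⟨_, h, fun M hM => (h.eq_of_le hM.ne_top ?_).symm⟩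
  rw [Ideal.map_le_iff_le_comap,
    ← eq_maximalIdeal (Ideal.isMaximal_comap_of_isIntegral_of_isMaximal M)]

theorem PadicInt.isLocalRing_of_isIntegral {p : ℕ} [Fact p.Prime] {S : Type*} [CommRing S]
    [Algebra ℤ_[p] S] [Algebra.IsIntegral ℤ_[p] S] (h : (Ideal.span {(p : S)}).IsMaximal) :
    IsLocalRing S := by
  refine .of_isIntegral_of_isMaximal_map (A := ℤ_[p]) ?_
  rwa [PadicInt.maximalIdeal_eq_span_p, Ideal.map_span, Set.image_singleton, map_natCast]

theorem PadicInt.isUnit_two {p : ℕ} [Fact p.Prime] (hp : Odd p) (S : Type*) [Semiring S]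
    [Algebra ℤ_[p] S] : IsUnit (2 : S) := by
  have h2 : IsUnit (2 : ℤ_[p]) := by
    rw [PadicInt.isUnit_iff, ← Nat.cast_ofNat, PadicInt.norm_natCast_eq_one_iff]
    exact Nat.coprime_two_right.mpr hp
  simpa only [map_ofNat] using h2.map (algebraMap ℤ_[p] S)

theorem exists_isUnit_apply_of_not_forall_dvd {ℓ : ℕ} [Fact ℓ.Prime] {E : Type*} [CommRing E]
    [Algebra ℤ_[ℓ] E] (hunram : (Ideal.span {(ℓ : integralClosure ℤ_[ℓ] E)}).IsMaximal)
    {h : Matrix (Fin 2) (Fin 2) E} {H : Matrix (Fin 2) (Fin 2) (integralClosure ℤ_[ℓ] E)} {e : ℕ}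
    (hH : h = (ℓ : E) ^ e • H.map (algebraMap _ E))
    (he : ¬ ∀ i j, ∃ r ∈ integralClosure ℤ_[ℓ] E, h i j = (ℓ : E) ^ (e + 1) * r) :
    ∃ i j, IsUnit (H i j) := by
  have := PadicInt.isLocalRing_of_isIntegral hunram
  by_contra! hnu
  refine he fun i j => ?_
  obtain ⟨c, hc⟩ := Ideal.mem_span_singleton'.mp
    ((eq_maximalIdeal hunram).symm ▸ (mem_maximalIdeal _).mpr (hnu i j))
  refine ⟨c, c.2, ?_⟩
  rw [hH, Matrix.smul_apply, map_apply, ← hc]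
  simp [pow_succ, mul_assoc, mul_comm (ℓ : E)]

section IntegralClosure

variable {ℓ : ℕ} [Fact ℓ.Prime] {E : Type*} [Field E] [Algebra ℚ_[ℓ] E] [Algebra ℤ_[ℓ] E]
  [IsScalarTower ℤ_[ℓ] ℚ_[ℓ] E]

noncomputable def integralClosureConj (σ : E ≃ₐ[ℚ_[ℓ]] E) :
    integralClosure ℤ_[ℓ] E →+* integralClosure ℤ_[ℓ] E :=
  (σ.restrictScalars ℤ_[ℓ]).mapIntegralClosure

theorem integralClosureConj_involutive (h2 : finrank ℚ_[ℓ] E = 2) {σ : E ≃ₐ[ℚ_[ℓ]] E}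
    (hσ : σ ≠ 1) : Function.Involutive (integralClosureConj σ) := fun x =>
  Subtype.ext (AlgEquiv.involutive_of_finrank_eq_two h2 hσ (x : E))

theorem exists_algebraMap_eq_of_integralClosureConj_apply_eq (h2 : finrank ℚ_[ℓ] E = 2)
    {σ : E ≃ₐ[ℚ_[ℓ]] E} (hσ : σ ≠ 1) {x : integralClosure ℤ_[ℓ] E}
    (hx : integralClosureConj σ x = x) : ∃ a : ℤ_[ℓ], algebraMap ℤ_[ℓ] _ a = x := by
  obtain ⟨a, ha⟩ :=
    exists_algebraMap_eq_of_isIntegral_of_fixed h2 hσ x.2 (congrArg Subtype.val hx)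
  exact ⟨a, Subtype.ext ha⟩

theorem exists_hermitian_eq_pow_smul {σ : E ≃ₐ[ℚ_[ℓ]] E} {h : Matrix (Fin 2) (Fin 2) E}
    (hherm : ∀ i j, h i j = σ (h j i)) {e : ℕ}
    (he : ∀ i j, ∃ r ∈ integralClosure ℤ_[ℓ] E, h i j = (ℓ : E) ^ e * r) :
    ∃ H : Matrix (Fin 2) (Fin 2) (integralClosure ℤ_[ℓ] E),
      h = (ℓ : E) ^ e • H.map (algebraMap _ E) ∧ conjTransposeBy (integralClosureConj σ) H = H := by
  have : CharZero E := charZero_of_injective_algebraMap (algebraMap ℚ_[ℓ] E).injective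
  have hℓ : (ℓ : E) ^ e ≠ 0 := pow_ne_zero _ (Nat.cast_ne_zero.mpr (Fact.out : ℓ.Prime).ne_zero)
  choose r hrR hr using he
  refine ⟨Matrix.of fun i j => ⟨r i j, hrR i j⟩, by ext i j; exact hr i j, ?_⟩
  ext i j
  refine mul_left_cancel₀ hℓ ?_
  change (ℓ : E) ^ e * σ (r j i) = ℓ ^ e * r i j
  rw [← hr i j, hherm, hr j i, map_mul, map_pow, map_natCast]

end IntegralClosure

theorem stmt_6_general (ℓ : ℕ) [Fact ℓ.Prime] (hℓodd : Odd ℓ)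
    (E : Type*) [Field E] [Algebra ℚ_[ℓ] E] [Algebra ℤ_[ℓ] E]
    [IsScalarTower ℤ_[ℓ] ℚ_[ℓ] E]
    (h2 : Module.finrank ℚ_[ℓ] E = 2)
    (R : Subalgebra ℤ_[ℓ] E) (hR : R = integralClosure ℤ_[ℓ] E)
    (hunram : (Ideal.span {(ℓ : R)}).IsMaximal)
    (σ : E ≃ₐ[ℚ_[ℓ]] E) (hσ : σ ≠ 1)
    (h : Matrix (Fin 2) (Fin 2) E)
    (hherm : ∀ i j, h i j = σ (h j i))
    (e : ℕ)
    (he1 : ∀ i j, ∃ r ∈ R, h i j = (ℓ : E) ^ e * r)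
    (he2 : ¬ ∀ i j, ∃ r ∈ R, h i j = (ℓ : E) ^ (e + 1) * r)
    (m : ℕ) :
    ∃ (u : Matrix (Fin 2) (Fin 2) E) (a d : ℤ_[ℓ]),
      (∀ i j, u i j ∈ R) ∧ u.det = 1 ∧ ¬ (ℓ : ℤ_[ℓ]) ∣ a ∧
      ∀ i j, ∃ r ∈ R,
        ((Matrix.of fun i j => σ (u j i)) * h * u) i j
          - (ℓ : E) ^ e *
              (Matrix.diagonal ![algebraMap ℤ_[ℓ] E a, algebraMap ℤ_[ℓ] E d]) i j
          = (ℓ : E) ^ m * r := by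
  subst hR
  have := PadicInt.isLocalRing_of_isIntegral hunram
  obtain ⟨H, hh, hH⟩ := exists_hermitian_eq_pow_smul hherm he1
  obtain ⟨u, hu, α, δ, hα, hτα, hτδ, hdiag⟩ := exists_det_eq_one_conj_eq_diagonal
    (integralClosureConj_involutive h2 hσ) (PadicInt.isUnit_two hℓodd _) hH
    (exists_isUnit_apply_of_not_forall_dvd hunram hh he2)
  obtain ⟨a, rfl⟩ := exists_algebraMap_eq_of_integralClosureConj_apply_eq h2 hσ hτα
  obtain ⟨d, rfl⟩ := exists_algebraMap_eq_of_integralClosureConj_apply_eq h2 hσ hτδ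
  let φ := algebraMap (integralClosure ℤ_[ℓ] E) E
  have hmat : (Matrix.of fun i j => σ (u.map φ j i)) * h * u.map φ
      = (ℓ : E) ^ e • (diagonal ![algebraMap ℤ_[ℓ] _ a, algebraMap ℤ_[ℓ] _ d]).map φ := by
    rw [hh, Matrix.mul_smul, Matrix.smul_mul, ← hdiag, Matrix.map_mul, Matrix.map_mul]
    rfl
  refine ⟨u.map φ, a, d, fun i j => (u i j).2, ?_, ?_, fun i j => ⟨0, zero_mem _, ?_⟩⟩
  · rw [← RingHom.mapMatrix_apply, ← RingHom.map_det, hu, map_one]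
  · rintro ⟨b, rfl⟩
    rw [map_mul, map_natCast] at hα
    exact hunram.ne_top (Ideal.span_singleton_eq_top.mpr (isUnit_of_mul_isUnit_left hα))
  · rw [hmat, mul_zero, sub_eq_zero]
    fin_cases i <;> fin_cases j <;> simp [φ]

/-- Diagonalization of hermitian matrices modulo `ℓ^m` over the ring of integers `R` of the
unramified quadratic extension of `ℚ_ℓ` (Krieg): if `h ≠ 0` is hermitian with `ε(h) = e`,
then `u* h u ≡ ℓ^e diag(a,d) (mod ℓ^m)` for some `u ∈ SL₂(R)`, `a, d ∈ ℤ_ℓ`, `ℓ ∤ a`. -/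
theorem stmt_6 (ℓ : ℕ) [Fact ℓ.Prime] (hℓodd : Odd ℓ)
    (E : Type*) [Field E] [Algebra ℚ_[ℓ] E] [Algebra ℤ_[ℓ] E]
    [IsScalarTower ℤ_[ℓ] ℚ_[ℓ] E]
    (h2 : Module.finrank ℚ_[ℓ] E = 2)
    (R : Subalgebra ℤ_[ℓ] E) (hR : R = integralClosure ℤ_[ℓ] E)
    (hunram : (Ideal.span {(ℓ : R)}).IsMaximal)
    (σ : E ≃ₐ[ℚ_[ℓ]] E) (hσ : σ ≠ 1)
    (h : Matrix (Fin 2) (Fin 2) E)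
    (hint : ∀ i j, h i j ∈ R)
    (hherm : ∀ i j, h i j = σ (h j i))
    (hne : h ≠ 0)
    (e : ℕ)
    (he1 : ∀ i j, ∃ r ∈ R, h i j = (ℓ : E) ^ e * r)
    (he2 : ¬ ∀ i j, ∃ r ∈ R, h i j = (ℓ : E) ^ (e + 1) * r)
    (m : ℕ) (hm : 0 < m) :
    ∃ (u : Matrix (Fin 2) (Fin 2) E) (a d : ℤ_[ℓ]),
      (∀ i j, u i j ∈ R) ∧ u.det = 1 ∧ ¬ (ℓ : ℤ_[ℓ]) ∣ a ∧
      ∀ i j, ∃ r ∈ R,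
        ((Matrix.of fun i j => σ (u j i)) * h * u) i j
          - (ℓ : E) ^ e *
              (Matrix.diagonal ![algebraMap ℤ_[ℓ] E a, algebraMap ℤ_[ℓ] E d]) i j
          = (ℓ : E) ^ m * r :=
  stmt_6_general ℓ hℓodd E h2 R hR hunram σ hσ h hherm e he1 he2 m
end

section
/- Let p be a prime, n ≥ 1, 0 ≤ k ≤ n, and let K = GL_n(ℤ_p). The double coset K · diag(p,…,p,1,…,1) · K (with k entries equal to p) is a disjoint union of exactly \binom{n}{k}_p left cosets Kg, where \binom{n}{k}_p = ∏_{i=1}^{k} (p^{n−k+i} − 1)/(p^{i} − 1) is the Gaussian binomial coefficient. -/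
/-!
The cosets `K t` contained in `K g K` are the `K g k` with `k ∈ K`, and `K g k = K g k'`
exactly when `k k'⁻¹ ∈ K ∩ g⁻¹ K g`; so there are `[K : K ∩ g⁻¹ K g]` of them. For
`g = diag(p,…,p,1,…,1)`, conjugation by `g` divides the lower-left `(n - k) × k` block by `p`,
so `K ∩ g⁻¹ K g` is the preimage under reduction mod `p` of the block upper triangular subgroup
`P ≅ (GL_k × GL_{n-k}) ⋉ M_{k × (n-k)}` of `GL_n(𝔽_p)`. Since reduction is onto, the count is
`[GL_n(𝔽_p) : P]`, and `|GL_j(𝔽_q)| = q^(j(j-1)/2) ∏_{i ≤ j} (q^i - 1)` turns this index into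
the Gaussian binomial coefficient.
-/

open Matrix Finset
open scoped MatrixGroups Pointwise

namespace Subgroup

variable {G : Type*} [Group G]

theorem mem_mul_singleton_iff (K : Subgroup G) {x t : G} :
    x ∈ (K : Set G) * {t} ↔ x * t⁻¹ ∈ K := by
  simp [Set.mul_singleton]

theorem mul_singleton_eq_iff (K : Subgroup G) {a b : G} :
    (K : Set G) * {a} = (K : Set G) * {b} ↔ a * b⁻¹ ∈ K := by
  refine ⟨fun h => ?_, fun h => Set.ext fun x => ?_⟩
  · have ha : a ∈ (K : Set G) * {a} := by
      rw [mem_mul_singleton_iff, mul_inv_cancel]; exact K.one_mem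
    rwa [h, mem_mul_singleton_iff] at ha
  · rw [mem_mul_singleton_iff, mem_mul_singleton_iff]
    constructor
    · intro hx; simpa [mul_assoc] using K.mul_mem hx h
    · intro hx; simpa [mul_assoc] using K.mul_mem hx (K.inv_mem h)

theorem mem_mul_singleton_mul_iff (K : Subgroup G) {g x : G} :
    x ∈ (K : Set G) * {g} * K ↔ ∃ k ∈ K, x ∈ (K : Set G) * {g * k} := by
  simp only [Set.mem_mul, Set.mem_singleton_iff, SetLike.mem_coe]
  constructor
  · rintro ⟨_, ⟨a, ha, _, rfl, rfl⟩, k, hk, rfl⟩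
    exact ⟨k, hk, a, ha, _, rfl, (mul_assoc _ _ _).symm⟩
  · rintro ⟨k, hk, a, ha, _, rfl, rfl⟩
    exact ⟨a * g, ⟨a, ha, g, rfl, rfl⟩, k, hk, mul_assoc _ _ _⟩

/-- The cosets `K g q⁻¹`, for `q` running over representatives of `K ⧸ (K ∩ g⁻¹ K g)`, are the
distinct cosets `K t` in `K g K`. -/
theorem exists_finset_mul_singleton_mul_eq_iUnion (K : Subgroup G) (g : G)
    (hfin : (K.comap (MulAut.conj g).toMonoidHom).relIndex K ≠ 0) :
    ∃ T : Finset G, T.card = (K.comap (MulAut.conj g).toMonoidHom).relIndex K ∧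
      (K : Set G) * {g} * (K : Set G) = ⋃ t ∈ (T : Set G), (K : Set G) * {t} ∧
      (T : Set G).PairwiseDisjoint (fun t => (K : Set G) * {t}) := by
  classical
  set L := (K.comap (MulAut.conj g).toMonoidHom).subgroupOf K
  have : Fintype (K ⧸ L) := fintypeOfIndexNeZero hfin
  have mem_L (k : K) : k ∈ L ↔ g * k * g⁻¹ ∈ K := Iff.rfl
  let f : K ⧸ L → G := fun q => g * (q.out : G)⁻¹
  have coset_f_mk (k : K) : (K : Set G) * {g * (k : G)⁻¹} = (K : Set G) * {f (k : K ⧸ L)} := by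
    obtain ⟨l, hl⟩ := QuotientGroup.mk_out_eq_mul L k
    rw [mul_singleton_eq_iff]
    simpa [f, hl, mul_assoc] using (mem_L l).1 l.2
  have eq_of_coset_eq {q q' : K ⧸ L} (h : (K : Set G) * {f q} = (K : Set G) * {f q'}) :
      q = q' := by
    rw [mul_singleton_eq_iff] at h
    rw [← QuotientGroup.out_eq' q, ← QuotientGroup.out_eq' q', QuotientGroup.eq, mem_L]
    simpa [f, mul_assoc] using h
  have f_inj : Function.Injective f := fun q q' h => eq_of_coset_eq (by rw [h])
  refine ⟨Finset.univ.image f, ?_, ?_, ?_⟩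
  · rw [Finset.card_image_of_injective _ f_inj, Finset.card_univ, ← Nat.card_eq_fintype_card]
    rfl
  · ext x
    simp only [mem_mul_singleton_mul_iff, Finset.coe_image, Finset.coe_univ, Set.image_univ,
      Set.mem_iUnion, Set.mem_range, exists_prop, exists_exists_eq_and]
    constructor
    · rintro ⟨k, hk, hx⟩
      refine ⟨(⟨k, hk⟩⁻¹ : K), ?_⟩
      rwa [← coset_f_mk, InvMemClass.coe_inv, inv_inv]
    · rintro ⟨q, hx⟩
      exact ⟨_, K.inv_mem q.out.2, hx⟩
  · simp only [Finset.coe_image, Finset.coe_univ, Set.image_univ]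
    rintro _ ⟨q, rfl⟩ _ ⟨q', rfl⟩ hne
    refine Set.disjoint_left.2 fun x hx hx' => hne (congrArg f (eq_of_coset_eq ?_))
    rw [mem_mul_singleton_iff] at hx hx'
    rw [mul_singleton_eq_iff]
    simpa [mul_assoc] using K.mul_mem (K.inv_mem hx) hx'

end Subgroup

theorem prod_range_pow_sub_pow {R : Type*} [CommRing R] (q : R) (j : ℕ) :
    ∏ i ∈ range j, (q ^ j - q ^ i) =
      q ^ (∑ i ∈ range j, i) * ∏ i ∈ range j, (q ^ (i + 1) - 1) := by
  rw [← prod_range_reflect (fun i => q ^ (i + 1) - 1), ← prod_pow_eq_pow_sum, ← prod_mul_distrib]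
  refine prod_congr rfl fun i hi => ?_
  rw [mul_sub, mul_one, ← pow_add]
  congr 2
  have := mem_range.1 hi
  omega

namespace Matrix

theorem card_GL_field_eq_prod_range (F : Type*) [Field F] [Fintype F] (j : ℕ) :
    (Nat.card (GL (Fin j) F) : ℤ) = (Fintype.card F : ℤ) ^ (∑ i ∈ range j, i) *
      ∏ i ∈ range j, ((Fintype.card F : ℤ) ^ (i + 1) - 1) := by
  rw [card_GL_field, Fin.prod_univ_eq_prod_range (fun i => Fintype.card F ^ j - Fintype.card F ^ i),
    ← prod_range_pow_sub_pow, Nat.cast_prod]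
  refine prod_congr rfl fun i hi => ?_
  have hq : 1 ≤ Fintype.card F := Fintype.card_pos
  rw [Nat.cast_sub (Nat.pow_le_pow_right hq (mem_range.1 hi).le)]
  push_cast
  rfl

theorem blockTriangular_sumElim_iff {k m R : Type*} [Zero R] {M : Matrix (k ⊕ m) (k ⊕ m) R} :
    M.BlockTriangular (Sum.elim (fun _ => false) fun _ => true) ↔ M.toBlocks₂₁ = 0 := by
  constructor
  · intro h
    ext i j
    exact h (by simp)
  · rintro h (i | i) (j | j) hij
    · exact absurd hij (lt_irrefl _)
    · exact absurd hij (by decide : ¬true < false)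
    · exact congrFun (congrFun h i) j
    · exact absurd hij (lt_irrefl _)

theorem isUnit_toBlocks₁₁_and_toBlocks₂₂ {k m R : Type*} [Fintype k] [DecidableEq k] [Fintype m]
    [DecidableEq m] [CommRing R] {M : Matrix (k ⊕ m) (k ⊕ m) R} (hM : IsUnit M)
    (h : M.toBlocks₂₁ = 0) : IsUnit M.toBlocks₁₁ ∧ IsUnit M.toBlocks₂₂ := by
  rw [← isUnit_fromBlocks_zero₂₁ (B := M.toBlocks₁₂), ← h, fromBlocks_toBlocks]
  exact hM

end Matrix

namespace Matrix.GeneralLinearGroup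

section BlockTriangular

variable {ι α R : Type*} [Fintype ι] [DecidableEq ι] [LinearOrder α] [CommRing R]

variable (R) in
def blockTriangular (b : ι → α) : Subgroup (GL ι R) where
  carrier := {A | (A : Matrix ι ι R).BlockTriangular b}
  mul_mem' {A B} hA hB := by simpa only [Set.mem_ofPred_eq, Units.val_mul] using hA.mul hB
  one_mem' := blockTriangular_one
  inv_mem' {A} hA := by
    simpa only [Set.mem_ofPred_eq, coe_units_inv] using blockTriangular_inv_of_blockTriangular hA

theorem mem_blockTriangular {b : ι → α} {A : GL ι R} :
    A ∈ blockTriangular R b ↔ (A : Matrix ι ι R).BlockTriangular b :=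
  Iff.rfl

theorem card_blockTriangular_comp_equiv {ι' : Type*} [Fintype ι'] [DecidableEq ι']
    (b : ι → α) (e : ι' ≃ ι) :
    Nat.card (blockTriangular R (b ∘ e)) = Nat.card (blockTriangular R b) :=
  Nat.card_congr <| (Units.mapEquiv (reindexAlgEquiv R R e).toMulEquiv).subtypeEquiv
    fun _ => blockTriangular_reindex_iff.symm

end BlockTriangular

section TwoBlocks

variable {k m R : Type*} [Fintype k] [DecidableEq k] [Fintype m] [DecidableEq m] [CommRing R]

noncomputable def blockTriangularSumElimEquiv :
    GL k R × GL m R × Matrix k m R ≃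
      blockTriangular R (Sum.elim (fun _ : k => false) fun _ : m => true) where
  toFun x := ⟨(isUnit_fromBlocks_zero₂₁ (B := x.2.2).2 ⟨x.1.isUnit, x.2.1.isUnit⟩).unit,
    blockTriangular_sumElim_iff.2 (toBlocks_fromBlocks₂₁ _ _ _ _)⟩
  invFun A :=
    have hA := isUnit_toBlocks₁₁_and_toBlocks₂₂ (A : GL (k ⊕ m) R).isUnit
      (blockTriangular_sumElim_iff.1 A.2)
    (hA.1.unit, hA.2.unit, ((A : GL (k ⊕ m) R) : Matrix (k ⊕ m) (k ⊕ m) R).toBlocks₁₂)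
  left_inv x := by
    ext <;> simp
  right_inv A := by
    ext : 2
    simp [← blockTriangular_sumElim_iff.1 A.2, fromBlocks_toBlocks]

theorem card_blockTriangular_sumElim :
    Nat.card (blockTriangular R (Sum.elim (fun _ : k => false) fun _ : m => true)) =
      Nat.card (GL k R) * Nat.card (GL m R) * Nat.card R ^ (Fintype.card k * Fintype.card m) := by
  rw [← Nat.card_congr blockTriangularSumElimEquiv, Nat.card_prod, Nat.card_prod, ← mul_assoc,
    Matrix, Nat.card_fun, Nat.card_fun, ← pow_mul,
    Nat.card_eq_fintype_card (α := k), Nat.card_eq_fintype_card (α := m)]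
  ring

end TwoBlocks

theorem index_blockTriangular_fin_mul_prod (F : Type*) [Field F] [Fintype F] (k m : ℕ) :
    ((blockTriangular F fun i : Fin (k + m) => decide ¬(i : ℕ) < k).index : ℤ) *
        ∏ i ∈ range k, ((Fintype.card F : ℤ) ^ (i + 1) - 1) =
      ∏ i ∈ range k, ((Fintype.card F : ℤ) ^ (m + i + 1) - 1) := by
  set P := blockTriangular F fun i : Fin (k + m) => decide ¬(i : ℕ) < k
  have hblocks : (fun i : Fin (k + m) => decide ¬(i : ℕ) < k) ∘ finSumFinEquiv =
      Sum.elim (fun _ : Fin k => false) fun _ : Fin m => true := by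
    funext i
    rcases i with i | i
    · simp only [Function.comp_apply, finSumFinEquiv_apply_left, Fin.val_castAdd, i.isLt,
        not_true_eq_false, decide_false, Sum.elim_inl]
    · simp
  have hcard : ((Nat.card (GL (Fin k) F) * Nat.card (GL (Fin m) F) * Fintype.card F ^ (k * m) *
      P.index : ℕ) : ℤ)
      = Nat.card (GL (Fin (k + m)) F) := by
    rw [← P.card_mul_index, ← card_blockTriangular_comp_equiv _ finSumFinEquiv, hblocks,
      card_blockTriangular_sumElim, Nat.card_eq_fintype_card (α := F), Fintype.card_fin,
      Fintype.card_fin]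
  push_cast at hcard
  have hq : 1 < (Fintype.card F : ℤ) := by exact_mod_cast Fintype.one_lt_card
  generalize P.index = N at hcard ⊢
  rw [card_GL_field_eq_prod_range, card_GL_field_eq_prod_range, card_GL_field_eq_prod_range,
    add_comm k m, prod_range_add, sum_range_add, sum_add_distrib, sum_const, card_range,
    smul_eq_mul] at hcard
  generalize (Fintype.card F : ℤ) = q at hcard hq ⊢
  have hne : (q : ℤ) ^ (∑ i ∈ range m, i + ∑ i ∈ range k, i + k * m) *
      ∏ i ∈ range m, ((q : ℤ) ^ (i + 1) - 1) ≠ 0 := by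
    refine mul_ne_zero (pow_ne_zero _ (by omega)) (prod_ne_zero_iff.2 fun i _ => ?_)
    exact sub_ne_zero.2 (one_lt_pow₀ hq (Nat.succ_ne_zero i)).ne'
  refine mul_right_cancel₀ hne ?_
  simp only [pow_add] at hcard ⊢
  linear_combination hcard

section Map

variable {ι R S : Type*} [Fintype ι] [DecidableEq ι] [CommRing R] [CommRing S]

theorem map_surjective (f : R →+* S) [IsLocalHom f] (hf : Function.Surjective f) :
    Function.Surjective (map (n := ι) f) := by
  intro A
  choose M hM using fun i j => hf (A i j)
  have hMA : (Matrix.of M).map f = A := by ext i j; exact hM i j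
  have hdet : IsUnit (Matrix.of M).det := by
    refine isUnit_of_map_unit f _ ?_
    rw [RingHom.map_det, RingHom.mapMatrix_apply, hMA]
    exact (isUnit_iff_isUnit_det _).1 A.isUnit
  exact ⟨((isUnit_iff_isUnit_det _).2 hdet).unit, Units.ext hMA⟩

theorem mem_range_map_iff (f : R →+* S) (hf : Function.Injective f) (A : GL ι S) :
    A ∈ (map f).range ↔ (∀ i j, A i j ∈ f.range) ∧ ∀ i j, A⁻¹ i j ∈ f.range := by
  constructor
  · rintro ⟨B, rfl⟩
    exact ⟨fun i j => ⟨B i j, (GeneralLinearGroup.map_apply f i j B).symm⟩,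
      fun i j => ⟨B⁻¹ i j, by rw [← map_inv, GeneralLinearGroup.map_apply]⟩⟩
  · rintro ⟨hA, hA'⟩
    choose M hM using hA
    choose N hN using hA'
    have hMA : (Matrix.of M).map f = A := by ext i j; exact hM i j
    have hNA : (Matrix.of N).map f = ↑A⁻¹ := by ext i j; exact hN i j
    have hmap_one : (1 : Matrix ι ι R).map f = 1 := Matrix.map_one f f.map_zero f.map_one
    refine ⟨⟨Matrix.of M, Matrix.of N, Matrix.map_injective hf ?_, Matrix.map_injective hf ?_⟩,
      Units.ext hMA⟩
    · dsimp only
      rw [Matrix.map_mul, hMA, hNA, hmap_one, A.mul_inv]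
    · dsimp only
      rw [Matrix.map_mul, hMA, hNA, hmap_one, A.inv_mul]

theorem mul_mul_inv_apply_of_eq_diagonal {K : Type*} [Field K] {g : GL ι K} {c : ι → K}
    (hg : (g : Matrix ι ι K) = diagonal c) (A : GL ι K) (i j : ι) :
    (g * A * g⁻¹) i j = c i * A i j * (c j)⁻¹ := by
  have hc : IsUnit c := isUnit_diagonal.1 (hg ▸ g.isUnit)
  have hcj : Ring.inverse c j = (c j)⁻¹ :=
    eq_inv_of_mul_eq_one_left (congrFun (Ring.inverse_mul_cancel c hc) j)
  rw [Units.val_mul, Units.val_mul, coe_units_inv, hg, inv_diagonal, mul_diagonal, diagonal_mul,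
    hcj]

end Map

end Matrix.GeneralLinearGroup

namespace PadicInt

variable {p : ℕ} [Fact p.Prime]

theorem coe_div_mem_range_iff (x : ℤ_[p]) :
    Coe.ringHom x / p ∈ (Coe.ringHom (p := p)).range ↔ toZMod x = 0 := by
  rw [← RingHom.mem_ker, ker_toZMod, maximalIdeal_eq_span_p, Ideal.mem_span_singleton']
  have hp : (p : ℚ_[p]) ≠ 0 := Nat.cast_ne_zero.2 (Fact.out : p.Prime).ne_zero
  refine exists_congr fun y => ?_
  rw [eq_div_iff hp, ← map_natCast Coe.ringHom p, ← map_mul]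
  exact (Subtype.coe_injective : Function.Injective (Coe.ringHom (p := p))).eq_iff

theorem ite_mul_mul_ite_inv_mem_range_iff (a b : Prop) [Decidable a] [Decidable b] (x : ℤ_[p]) :
    (if a then (p : ℚ_[p]) else 1) * Coe.ringHom x * (if b then (p : ℚ_[p]) else 1)⁻¹ ∈
      (Coe.ringHom (p := p)).range ↔ (¬a → b → toZMod x = 0) := by
  have hp : (p : ℚ_[p]) ≠ 0 := Nat.cast_ne_zero.2 (Fact.out : p.Prime).ne_zero
  split_ifs with ha hb hb
  · exact iff_of_true ⟨x, by rw [mul_comm (p : ℚ_[p]), mul_inv_cancel_right₀ hp]⟩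
      fun h => absurd ha h
  · exact iff_of_true ⟨p * x, by rw [map_mul, map_natCast, inv_one, mul_one]⟩
      fun h => absurd ha h
  · rw [one_mul, ← div_eq_mul_inv]
    exact (coe_div_mem_range_iff x).trans ⟨fun h _ _ => h, fun h => h ha hb⟩
  · exact iff_of_true ⟨x, by rw [one_mul, inv_one, mul_one]⟩ fun _ h => absurd h hb

end PadicInt

namespace Matrix.GeneralLinearGroup

open PadicInt

variable {p : ℕ} [Fact p.Prime] {ι : Type*} [Fintype ι] [DecidableEq ι]

/-- The labels `decide ¬P i` put the indices with `P i` into the first block. -/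
theorem conj_diagonal_mem_range_map_iff (P : ι → Prop) [DecidablePred P] {g : GL ι ℚ_[p]}
    (hg : (g : Matrix ι ι ℚ_[p]) = diagonal fun i => if P i then (p : ℚ_[p]) else 1)
    (u : GL ι ℤ_[p]) :
    g * map Coe.ringHom u * g⁻¹ ∈ (map (Coe.ringHom (p := p))).range ↔
      map toZMod u ∈ blockTriangular (ZMod p) fun i => decide ¬P i := by
  have entries (v : GL ι ℤ_[p]) :
      (∀ i j, (g * map Coe.ringHom v * g⁻¹) i j ∈ (Coe.ringHom (p := p)).range) ↔
        map toZMod v ∈ blockTriangular (ZMod p) fun i => decide ¬P i := by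
    simp only [mul_mul_inv_apply_of_eq_diagonal hg, GeneralLinearGroup.map_apply,
      ite_mul_mul_ite_inv_mem_range_iff, mem_blockTriangular, BlockTriangular, Bool.lt_iff,
      decide_eq_false_iff_not, decide_eq_true_eq, not_not, and_imp]
    exact forall₂_congr fun _ _ => imp.swap
  have hinv : (g * map Coe.ringHom u * g⁻¹)⁻¹ = g * map Coe.ringHom u⁻¹ * g⁻¹ := by
    simp [mul_assoc]
  rw [mem_range_map_iff _ Subtype.coe_injective, hinv, entries, entries, map_inv]
  exact ⟨And.left, fun h => ⟨h, inv_mem h⟩⟩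

theorem relIndex_comap_conj_diagonal (P : ι → Prop) [DecidablePred P] {g : GL ι ℚ_[p]}
    (hg : (g : Matrix ι ι ℚ_[p]) = diagonal fun i => if P i then (p : ℚ_[p]) else 1) :
    ((map (Coe.ringHom (p := p))).range.comap (MulAut.conj g).toMonoidHom).relIndex
        (map (Coe.ringHom (p := p))).range =
      (blockTriangular (ZMod p) fun i => decide ¬P i).index := by
  set K := (map (n := ι) (Coe.ringHom (p := p))).range
  have hπ := ZMod.ringHom_surjective (toZMod (p := p))
  have : IsLocalHom (toZMod (p := p)) := .of_surjective _ hπ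
  have hcomap : ((K.comap (MulAut.conj g).toMonoidHom).subgroupOf K).comap
      (map Coe.ringHom).rangeRestrict =
      (blockTriangular (ZMod p) fun i => decide ¬P i).comap (map toZMod) := by
    ext u
    exact conj_diagonal_mem_range_map_iff P hg u
  rw [Subgroup.relIndex, ← Subgroup.index_comap_of_surjective _
    (MonoidHom.rangeRestrict_surjective _), hcomap,
    Subgroup.index_comap_of_surjective _ (map_surjective _ hπ)]

end Matrix.GeneralLinearGroup

theorem stmt_7_general (p : ℕ) [Fact p.Prime] (n k : ℕ) (hk : k ≤ n)
    (K : Subgroup (GL (Fin n) ℚ_[p]))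
    (hK : K = (Units.map
      ((PadicInt.Coe.ringHom (p := p)).mapMatrix (m := Fin n)).toMonoidHom).range)
    (g : GL (Fin n) ℚ_[p])
    (hg : (g : Matrix (Fin n) (Fin n) ℚ_[p])
      = Matrix.diagonal fun i : Fin n => if (i : ℕ) < k then (p : ℚ_[p]) else 1) :
    ∃ T : Finset (GL (Fin n) ℚ_[p]),
      ((T.card : ℤ) * ∏ i ∈ Finset.range k, ((p : ℤ) ^ (i + 1) - 1)
        = ∏ i ∈ Finset.range k, ((p : ℤ) ^ (n - k + i + 1) - 1)) ∧
      (K : Set (GL (Fin n) ℚ_[p])) * {g} * (K : Set (GL (Fin n) ℚ_[p]))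
        = ⋃ t ∈ (T : Set (GL (Fin n) ℚ_[p])), (K : Set (GL (Fin n) ℚ_[p])) * {t} ∧
      (T : Set (GL (Fin n) ℚ_[p])).PairwiseDisjoint
        (fun t => (K : Set (GL (Fin n) ℚ_[p])) * {t}) := by
  obtain ⟨m, rfl⟩ := Nat.exists_eq_add_of_le hk
  have hrel : (K.comap (MulAut.conj g).toMonoidHom).relIndex K =
      (GeneralLinearGroup.blockTriangular (ZMod p)
        fun i : Fin (k + m) => decide ¬(i : ℕ) < k).index := by
    subst hK
    exact GeneralLinearGroup.relIndex_comap_conj_diagonal _ hg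
  obtain ⟨T, hcard, hcover, hdisj⟩ :=
    K.exists_finset_mul_singleton_mul_eq_iUnion g (hrel ▸ Subgroup.index_ne_zero_of_finite)
  refine ⟨T, ?_, hcover, hdisj⟩
  rw [hcard, hrel, Nat.add_sub_cancel_left]
  simpa [ZMod.card] using GeneralLinearGroup.index_blockTriangular_fin_mul_prod (ZMod p) k m

/-- The double coset `K diag(p,…,p,1,…,1) K` (with `k` entries `p`), for
`K = GL_n(ℤ_p) ⊆ GL_n(ℚ_p)`, is a disjoint union of exactly `binom(n,k)_p` left cosets
`K·g`, where `binom(n,k)_p = ∏_{i=1}^{k} (p^{n-k+i} - 1)/(p^i - 1)` is the Gaussian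
binomial coefficient. -/
theorem stmt_7 (p : ℕ) [Fact p.Prime] (n k : ℕ) (hn : 1 ≤ n) (hk : k ≤ n)
    (K : Subgroup (GL (Fin n) ℚ_[p]))
    (hK : K = (Units.map
      ((PadicInt.Coe.ringHom (p := p)).mapMatrix (m := Fin n)).toMonoidHom).range)
    (g : GL (Fin n) ℚ_[p])
    (hg : (g : Matrix (Fin n) (Fin n) ℚ_[p])
      = Matrix.diagonal fun i : Fin n => if (i : ℕ) < k then (p : ℚ_[p]) else 1) :
    ∃ T : Finset (GL (Fin n) ℚ_[p]),
      ((T.card : ℤ) * ∏ i ∈ Finset.range k, ((p : ℤ) ^ (i + 1) - 1)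
        = ∏ i ∈ Finset.range k, ((p : ℤ) ^ (n - k + i + 1) - 1)) ∧
      (K : Set (GL (Fin n) ℚ_[p])) * {g} * (K : Set (GL (Fin n) ℚ_[p]))
        = ⋃ t ∈ (T : Set (GL (Fin n) ℚ_[p])), (K : Set (GL (Fin n) ℚ_[p])) * {t} ∧
      (T : Set (GL (Fin n) ℚ_[p])).PairwiseDisjoint
        (fun t => (K : Set (GL (Fin n) ℚ_[p])) * {t}) :=
  stmt_7_general p n k hk K hK g hg
end
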